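/- Fix a subset A ⊆ Hom_K(F, K̄) and a finite extension E of K inside K̄ containing E_A. Then the Eisenstein ideal admits the description J_A = ker[ O_F ⊗_{O_K} O_E → ∏_{φ∈A} K̄ ], where the φ-component of the map sends a ⊗ e to φ(a)·e ∈ K̄ (using the inclusions φ(F) ⊆ K̄ and E ⊆ K̄). -/

import Mathlib

/-! Since `O_F = O_K[ζ]`, every element of `O_F ⊗_{O_K} O_E` is `g(ζ ⊗ 1)` for some
`g ∈ O_E[T]`, and its `φ`-component is `g(φ(ζ))`. The values `φ(ζ)`, `φ ∈ A`, are pairwise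
distinct, because `F` is the fraction field of `O_F`. So `x` is in the kernel iff
`e_A = ∏_{φ ∈ A} (T - φ(ζ))` divides `g` in `K̄[T]`; as `e_A` is monic with coefficients in
`O_E`, this happens iff `e_A ∣ g` in `O_E[T]`, i.e. iff `x ∈ J_A`. -/

open scoped TensorProduct Polynomial

set_option synthInstance.maxHeartbeats 400000
set_option maxHeartbeats 1000000

noncomputable section

variable (p : ℕ) [Fact p.Prime]

/-- The ring of integers of a `p`-adic field `L`: the integral closure of `ℤₚ` in `L`. -/
def RInt (L : Type) [Field L] [Algebra ℤ_[p] L] : Type := ↥(integralClosure ℤ_[p] L)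

local instance instCR (L : Type) [Field L] [Algebra ℤ_[p] L] : CommRing (RInt p L) :=
  inferInstanceAs (CommRing ↥(integralClosure ℤ_[p] L))

local instance instAlgL (L : Type) [Field L] [Algebra ℤ_[p] L] : Algebra (RInt p L) L :=
  inferInstanceAs (Algebra ↥(integralClosure ℤ_[p] L) L)

/-- Functoriality of rings of integers. -/
def RIntMap (L L' : Type) [Field L] [Field L'] [Algebra ℤ_[p] L] [Algebra ℤ_[p] L']
    (f : L →ₐ[ℤ_[p]] L') : RInt p L →+* RInt p L' :=
  show ↥(integralClosure ℤ_[p] L) →+* ↥(integralClosure ℤ_[p] L') from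
  { toFun := fun x => ⟨f x, IsIntegral.map f x.2⟩
    map_one' := by ext; simp
    map_mul' := fun x y => by ext; simp
    map_zero' := by ext; simp
    map_add' := fun x y => by ext; simp }

section Galois

variable (K F : Type) [Field K] [Field F] [Algebra K F]

/-- The stabilizer of a finite set of embeddings `F →ₐ[K] K̄` inside `Gal(K̄/K)`:
the set of `σ` with `σ ∘ S = S`. -/
def galStab (S : Finset (F →ₐ[K] AlgebraicClosure K)) :
    Subgroup (AlgebraicClosure K ≃ₐ[K] AlgebraicClosure K) := by
  letI := Classical.decEq (F →ₐ[K] AlgebraicClosure K)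
  exact
  { carrier := {σ | S.image (fun φ =>
        ((σ : AlgebraicClosure K →ₐ[K] AlgebraicClosure K)).comp φ) = S}
    one_mem' := by
      have h : (fun φ : F →ₐ[K] AlgebraicClosure K =>
          (((1 : AlgebraicClosure K ≃ₐ[K] AlgebraicClosure K) :
            AlgebraicClosure K →ₐ[K] AlgebraicClosure K)).comp φ) = id := by
        funext φ; exact AlgHom.ext fun x => rfl
      simp only [Set.mem_setOf_eq, h, Finset.image_id]
    mul_mem' := by
      intro σ τ hσ hτ
      simp only [Set.mem_setOf_eq] at hσ hτ ⊢
      have h : (fun φ : F →ₐ[K] AlgebraicClosure K =>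
          (((σ * τ : AlgebraicClosure K ≃ₐ[K] AlgebraicClosure K) :
            AlgebraicClosure K →ₐ[K] AlgebraicClosure K)).comp φ)
          = (fun φ => ((σ : AlgebraicClosure K →ₐ[K] AlgebraicClosure K)).comp φ) ∘
            (fun φ => ((τ : AlgebraicClosure K →ₐ[K] AlgebraicClosure K)).comp φ) := by
        funext φ; exact AlgHom.ext fun x => rfl
      rw [h, ← Finset.image_image, hτ, hσ]
    inv_mem' := by
      intro σ hσ
      simp only [Set.mem_setOf_eq] at hσ ⊢
      conv_lhs => rw [← hσ]
      rw [Finset.image_image]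
      have h : ((fun φ : F →ₐ[K] AlgebraicClosure K =>
          (((σ⁻¹ : AlgebraicClosure K ≃ₐ[K] AlgebraicClosure K) :
            AlgebraicClosure K →ₐ[K] AlgebraicClosure K)).comp φ) ∘
          (fun φ => ((σ : AlgebraicClosure K →ₐ[K] AlgebraicClosure K)).comp φ)) = id := by
        funext φ
        exact AlgHom.ext fun x => σ.symm_apply_apply (φ x)
      rw [h, Finset.image_id] }

/-- The reflex field `E_S ⊆ K̄` of a set `S` of embeddings `F →ₐ[K] K̄`: the fixed field
of its stabilizer in `Gal(K̄/K)`. -/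
def reflexField (S : Finset (F →ₐ[K] AlgebraicClosure K)) :
    IntermediateField K (AlgebraicClosure K) :=
  IntermediateField.fixedField (galStab K F S)

end Galois

section Eis

/- `K` is a finite extension of `ℚₚ` (with its induced `ℤₚ`-algebra structure), `F` is a
finite extension of `K`, and `E` is a further finite extension of `K` equipped with a
`K`-embedding `ιE : E → K̄` realizing it as a subfield of an algebraic closure of `K`. -/
variable (K : Type) [Field K] [Algebra ℚ_[p] K] [FiniteDimensional ℚ_[p] K]
  [Algebra ℤ_[p] K] [IsScalarTower ℤ_[p] ℚ_[p] K]
variable (F : Type) [Field F] [Algebra K F] [FiniteDimensional K F]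
  [Algebra ℤ_[p] F] [IsScalarTower ℤ_[p] K F]
variable (E : Type) [Field E] [Algebra K E] [Algebra ℤ_[p] E] [IsScalarTower ℤ_[p] K E]

local instance algOKOF : Algebra (RInt p K) (RInt p F) :=
  (RIntMap p K F (IsScalarTower.toAlgHom ℤ_[p] K F)).toAlgebra

local instance algOKOE : Algebra (RInt p K) (RInt p E) :=
  (RIntMap p K E (IsScalarTower.toAlgHom ℤ_[p] K E)).toAlgebra

variable (ιE : E →ₐ[K] AlgebraicClosure K)

/-- The canonical map `O_E → K̄` induced by `ιE : E → K̄`. -/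
def OEtoKb : RInt p E →+* AlgebraicClosure K :=
  (ιE : E →+* AlgebraicClosure K).comp (algebraMap (RInt p E) E)

/-- `Q ∈ O_E[T]` represents the Eisenstein polynomial `e_{ζ,S}(T) = ∏_{φ ∈ S} (T - φ(ζ))`. -/
def IsEisPoly (S : Finset (F →ₐ[K] AlgebraicClosure K)) (ζ : RInt p F)
    (Q : Polynomial (RInt p E)) : Prop :=
  Q.map (OEtoKb p K E ιE) =
    ∏ φ ∈ S, (Polynomial.X - Polynomial.C (φ (algebraMap (RInt p F) F ζ)))

variable (R : Type) [CommRing R] [Algebra (RInt p K) R] [Algebra (RInt p E) R]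

/-- The element `e_S = e_{ζ,S}(ζ ⊗ 1)` of `O_F ⊗_{O_K} R`, where `Q ∈ O_E[T]`
represents the Eisenstein polynomial `e_{ζ,S}(T)`. -/
def eElt (Q : Polynomial (RInt p E)) (ζ : RInt p F) : (RInt p F) ⊗[RInt p K] R :=
  Polynomial.eval₂
    ((Algebra.TensorProduct.includeRight :
        R →ₐ[RInt p K] (RInt p F) ⊗[RInt p K] R).toRingHom.comp (algebraMap (RInt p E) R))
    (ζ ⊗ₜ[RInt p K] (1 : R)) Q

/-- The Eisenstein ideal `J_{S,R} ⊆ O_F ⊗_{O_K} R`, generated by `e_S`. -/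
def JIdeal (Q : Polynomial (RInt p E)) (ζ : RInt p F) :
    Ideal ((RInt p F) ⊗[RInt p K] R) :=
  Ideal.span {eElt p K F E R Q ζ}

local instance algOKKb : Algebra (RInt p K) (AlgebraicClosure K) :=
  ((algebraMap K (AlgebraicClosure K)).comp (algebraMap (RInt p K) K)).toAlgebra

/-- The restriction of an embedding `φ : F →ₐ[K] K̄` to the ring of integers, as an
`O_K`-algebra homomorphism `O_F →ₐ[O_K] K̄`. -/
def embToKb (φ : F →ₐ[K] AlgebraicClosure K) : RInt p F →ₐ[RInt p K] AlgebraicClosure K where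
  toRingHom := (φ : F →+* AlgebraicClosure K).comp (algebraMap (RInt p F) F)
  commutes' := fun r => by
    have h1 : (algebraMap (RInt p F) F) ((algebraMap (RInt p K) (RInt p F)) r)
        = algebraMap K F ((algebraMap (RInt p K) K) r) := by
      show algebraMap K F ((IsScalarTower.toAlgHom ℤ_[p] K K) ((algebraMap (RInt p K) K) r)) = _
      rfl
    show φ ((algebraMap (RInt p F) F) ((algebraMap (RInt p K) (RInt p F)) r)) = _
    rw [h1, φ.commutes]
    rfl

/-- The inclusion `O_E → K̄` as an `O_K`-algebra homomorphism. -/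
def oEToKb : RInt p E →ₐ[RInt p K] AlgebraicClosure K where
  toRingHom := OEtoKb p K E ιE
  commutes' := fun r => by
    have h1 : (algebraMap (RInt p E) E) ((algebraMap (RInt p K) (RInt p E)) r)
        = algebraMap K E ((algebraMap (RInt p K) K) r) := by
      show algebraMap K E ((IsScalarTower.toAlgHom ℤ_[p] K K) ((algebraMap (RInt p K) K) r)) = _
      rfl
    show ιE ((algebraMap (RInt p E) E) ((algebraMap (RInt p K) (RInt p E)) r)) = _
    rw [h1, ιE.commutes]
    rfl

/-- The map `O_F ⊗_{O_K} O_E → K̄` whose value on `a ⊗ e` is `φ(a)·e`. -/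
def phiComponent (φ : F →ₐ[K] AlgebraicClosure K) :
    (RInt p F) ⊗[RInt p K] (RInt p E) →ₐ[RInt p K] AlgebraicClosure K :=
  Algebra.TensorProduct.productMap (embToKb p K F φ) (oEToKb p K E ιE)

section TensorEval

open Polynomial Algebra.TensorProduct

variable {S A B L : Type*} [CommRing S] [CommRing A] [CommRing B] [Algebra S A] [Algebra S B]

theorem Polynomial.prod_X_sub_C_dvd_of_forall_isRoot [Field L] {ι : Type*} {s : Finset ι}
    {a : ι → L} (ha : Set.InjOn a s) {P : L[X]} (hP : ∀ i ∈ s, P.IsRoot (a i)) :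
    ∏ i ∈ s, (X - C (a i)) ∣ P := by
  refine Finset.prod_dvd_of_coprime (fun i hi j hj hij => ?_)
    fun i hi => dvd_iff_isRoot.mpr (hP i hi)
  exact isCoprime_X_sub_C_of_isUnit_sub (sub_ne_zero.mpr fun h => hij (ha hi hj h)).isUnit

theorem eval₂_includeRight_tmul_one_surjective {ζ : A} (hζ : Algebra.adjoin S {ζ} = ⊤) :
    Function.Surjective fun Q : B[X] =>
      Q.eval₂ (includeRight : B →ₐ[S] A ⊗[S] B).toRingHom (ζ ⊗ₜ 1) := by
  let ev := eval₂RingHom (includeRight : B →ₐ[S] A ⊗[S] B).toRingHom (ζ ⊗ₜ 1)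
  have hleft (a : A) : a ⊗ₜ[S] (1 : B) ∈ ev.range := by
    have ha : a ∈ Algebra.adjoin S {ζ} := hζ ▸ Algebra.mem_top
    rw [Algebra.adjoin_singleton_eq_range_aeval] at ha
    obtain ⟨P, rfl⟩ := ha
    refine ⟨P.map (algebraMap S B), ?_⟩
    change eval₂ _ _ (P.map (algebraMap S B)) = includeLeft (S := S) (B := B) (aeval ζ P)
    rw [eval₂_map, ← aeval_algHom_apply, aeval_def]
    congr 1
    exact (includeRight : B →ₐ[S] A ⊗[S] B).comp_algebraMap
  intro x
  induction x using TensorProduct.induction_on with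
  | zero => exact ⟨0, eval₂_zero _ _⟩
  | tmul a b =>
    rw [← mul_one a, ← one_mul b, ← Algebra.TensorProduct.tmul_mul_tmul]
    exact ev.range.mul_mem (hleft a) ⟨C b, eval₂_C _ _⟩
  | add x y hx hy => exact ev.range.add_mem hx hy

theorem productMap_eval₂_includeRight_tmul_one [CommRing L] [Algebra S L] (f : A →ₐ[S] L)
    (g : B →ₐ[S] L) (ζ : A) (Q : B[X]) :
    productMap f g (Q.eval₂ (includeRight : B →ₐ[S] A ⊗[S] B).toRingHom (ζ ⊗ₜ 1)) =
      (Q.map (g : B →+* L)).eval (f ζ) := by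
  rw [← RingHom.coe_coe (productMap f g), hom_eval₂, eval_map]
  congr 1
  · ext b
    simp
  · simp

theorem mem_span_eval₂_includeRight_iff [Field L] [Algebra S L] {ζ : A}
    (hζ : Algebra.adjoin S {ζ} = ⊤) {ι : Type*} {s : Finset ι} (f : ι → A →ₐ[S] L)
    (hf : Set.InjOn (fun i => f i ζ) s) (g : B →ₐ[S] L) (hg : Function.Injective g) {Q : B[X]}
    (hQ : Q.map (g : B →+* L) = ∏ i ∈ s, (X - C (f i ζ))) (x : A ⊗[S] B) :
    x ∈ Ideal.span {Q.eval₂ (includeRight : B →ₐ[S] A ⊗[S] B).toRingHom (ζ ⊗ₜ 1)} ↔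
      ∀ i ∈ s, productMap (f i) g x = 0 := by
  rw [Ideal.mem_span_singleton']
  constructor
  · rintro ⟨c, rfl⟩ i hi
    rw [map_mul, productMap_eval₂_includeRight_tmul_one, hQ, eval_prod,
      Finset.prod_eq_zero hi (by simp), mul_zero]
  · intro hx
    obtain ⟨P, rfl⟩ := eval₂_includeRight_tmul_one_surjective hζ x
    have hroots (i) (hi : i ∈ s) : (P.map (g : B →+* L)).IsRoot (f i ζ) := by
      rw [IsRoot, ← productMap_eval₂_includeRight_tmul_one]
      exact hx i hi
    have hQP : Q.map (g : B →+* L) ∣ P.map (g : B →+* L) :=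
      hQ ▸ prod_X_sub_C_dvd_of_forall_isRoot hf hroots
    have hQ_monic : Q.Monic :=
      monic_of_injective hg (hQ ▸ monic_prod_of_monic _ _ fun i _ => monic_X_sub_C _)
    obtain ⟨H, rfl⟩ := (map_dvd_map _ hg hQ_monic).mp hQP
    exact ⟨H.eval₂ _ (ζ ⊗ₜ 1), (mul_comm _ _).trans (eval₂_mul _ _).symm⟩

end TensorEval

theorem embToKb_injective : Function.Injective (embToKb p K F) := by
  have : Algebra.IsAlgebraic ℤ_[p] K :=
    IsFractionRing.comap_isAlgebraic_iff (K := ℚ_[p]).mpr inferInstance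
  have : Algebra.IsAlgebraic ℤ_[p] F := Algebra.IsAlgebraic.trans ℤ_[p] K F
  have : IsFractionRing (RInt p F) F := integralClosure.isFractionRing_of_algebraic fun y hy => by
    rwa [IsScalarTower.algebraMap_apply ℤ_[p] K F, map_eq_zero,
      IsScalarTower.algebraMap_apply ℤ_[p] ℚ_[p] K, map_eq_zero,
      IsFractionRing.to_map_eq_zero_iff] at hy
  intro φ ψ h
  exact AlgHom.coe_ringHom_injective <|
    IsFractionRing.ringHom_ext (A := RInt p F) fun a => DFunLike.congr_fun h a

theorem injective_apply_of_adjoin_eq_top {ζ : RInt p F}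
    (hζ : Algebra.adjoin (RInt p K) {ζ} = ⊤) :
    Function.Injective fun φ : F →ₐ[K] AlgebraicClosure K => φ (algebraMap (RInt p F) F ζ) :=
  fun _ _ h =>
    embToKb_injective p K F (AlgHom.ext_of_adjoin_eq_top hζ (Set.eqOn_singleton.mpr h))

theorem statement2
    (A : Finset (F →ₐ[K] AlgebraicClosure K))
    (ζ : RInt p F) (hζ : Algebra.adjoin (RInt p K) {ζ} = ⊤)
    (Q : Polynomial (RInt p E)) (hQ : IsEisPoly p K F E ιE A ζ Q) :
    ∀ x : (RInt p F) ⊗[RInt p K] (RInt p E),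
      x ∈ JIdeal p K F E (RInt p E) Q ζ ↔ ∀ φ ∈ A, phiComponent p K F E ιE φ x = 0 :=
  mem_span_eval₂_includeRight_iff hζ (embToKb p K F)
    (injective_apply_of_adjoin_eq_top p K F hζ).injOn
    (oEToKb p K E ιE) ((ιE : E →+* AlgebraicClosure K).injective.comp Subtype.val_injective) hQ

end Eis

end
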